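/- For all integers n ≥ 1 and k ≥ 1, the number of subsets E of {0, 1, ..., kn-1} of cardinality n satisfying the ballot condition (for every j with 1 ≤ j ≤ kn, k·|{i ∈ E : i < j}| ≥ j) is equal to the number of prefix-closed sets of n words over a k-letter alphabet (finite subsets P of List (Fin k) with |P| = n closed under taking prefixes). -/

import Mathlib

/-!
Both sides are in bijection with rooted `k`-ary trees with `n` internal nodes. A tree is determined
by the set of addresses of its internal nodes, and these address sets are exactly the finite
prefix-closed sets of words. A tree is also determined by its preorder (Łukasiewicz) code, `true`
for an internal node and `false` for a leaf, and the codes are characterised by a counting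
condition on their prefixes. For the indicator word of a subset `E` followed by one `false`, that
condition after `j` letters reads `j < 1 + k·|{i ∈ E : i < j}|`, which is the ballot condition.
-/

open Finset

inductive KTree (k : ℕ) : Type where
  | leaf : KTree k
  | node : (Fin k → KTree k) → KTree k

namespace KTree

variable {k : ℕ}

def code : KTree k → List Bool
  | leaf => [false]
  | node f => true :: (List.ofFn fun i => code (f i)).flatten

def forestCode (ts : List (KTree k)) : List Bool :=
  (ts.map code).flatten

@[simp]
theorem forestCode_nil : forestCode ([] : List (KTree k)) = [] := rfl

@[simp]
theorem forestCode_singleton (t : KTree k) : forestCode [t] = code t := by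
  simp [forestCode]

@[simp]
theorem forestCode_leaf_cons (ts : List (KTree k)) :
    forestCode (leaf :: ts) = false :: forestCode ts := rfl

@[simp]
theorem forestCode_node_cons (f : Fin k → KTree k) (ts : List (KTree k)) :
    forestCode (node f :: ts) = true :: forestCode (List.ofFn f ++ ts) := by
  simp [forestCode, code, List.map_ofFn, Function.comp_def]

theorem forestCode_cons_ne_nil (t : KTree k) (ts : List (KTree k)) :
    forestCode (t :: ts) ≠ [] := by
  cases t <;> simp

end KTree

/-- `m` counts the subtrees still to be read: a `true` (internal node) replaces one of them by its
`k` children, a `false` (leaf) uses one up. -/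
def IsLukasiewicz (k : ℕ) : ℤ → List Bool → Prop
  | m, [] => m = 0
  | m, b :: l => 0 < m ∧ IsLukasiewicz k (m + if b then (k : ℤ) - 1 else -1) l

theorem isLukasiewicz_iff {k : ℕ} {m : ℤ} {l : List Bool} :
    IsLukasiewicz k m l ↔
      (∀ j < l.length, (j : ℤ) < m + k * (l.take j).count true) ∧
        (l.length : ℤ) = m + k * l.count true := by
  induction l generalizing m with
  | nil => simp [IsLukasiewicz, eq_comm]
  | cons b l ih =>
    simp only [IsLukasiewicz, ih, List.length_cons, Nat.forall_lt_succ_left, List.take_succ_cons,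
      List.take_zero, List.count_cons, List.count_nil]
    cases b <;> simp only [Bool.false_eq_true, if_false, if_true, beq_self_eq_true, beq_iff_eq,
      Nat.cast_add, Nat.cast_zero, Nat.cast_one, mul_zero, add_zero] <;>
    exact ⟨fun ⟨h0, h1, h2⟩ ↦ ⟨⟨h0, fun j hj ↦ by linarith [h1 j hj]⟩, by linarith⟩,
      fun ⟨⟨h0, h1⟩, h2⟩ ↦ ⟨h0, fun j hj ↦ by linarith [h1 j hj], by linarith⟩⟩

theorem IsLukasiewicz.eq_false_of_append {k : ℕ} (hk : 0 < k) {m : ℤ} {w : List Bool} {b : Bool}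
    (h : IsLukasiewicz k m (w ++ [b])) : b = false := by
  obtain ⟨hlt, hlen⟩ := isLukasiewicz_iff.mp h
  have hw := hlt w.length (by simp)
  rw [List.take_left' rfl] at hw
  cases b
  · rfl
  · simp only [List.length_append, List.length_singleton, List.count_append,
      List.count_singleton_self] at hlen
    push_cast at hlen
    have : (0 : ℤ) < k := by exact_mod_cast hk
    linarith

namespace KTree

variable {k : ℕ}

theorem isLukasiewicz_forestCode :
    ∀ ts : List (KTree k), IsLukasiewicz k ts.length (forestCode ts)
  | [] => by simp [IsLukasiewicz]
  | leaf :: ts => by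
    simp only [forestCode_leaf_cons, IsLukasiewicz]
    refine ⟨by simp, ?_⟩
    convert isLukasiewicz_forestCode ts using 1
    simp
  | node f :: ts => by
    simp only [forestCode_node_cons, IsLukasiewicz]
    refine ⟨by simp, ?_⟩
    convert isLukasiewicz_forestCode (List.ofFn f ++ ts) using 1
    simp only [if_true, List.length_cons, List.length_append, List.length_ofFn]
    push_cast
    ring
termination_by ts => (forestCode ts).length
decreasing_by all_goals simp

theorem forestCode_inj : ∀ {ts ss : List (KTree k)}, forestCode ts = forestCode ss → ts = ss
  | [], [], _ => rfl
  | [], _ :: _, h => (forestCode_cons_ne_nil _ _ h.symm).elim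
  | _ :: _, [], h => (forestCode_cons_ne_nil _ _ h).elim
  | leaf :: ts, leaf :: ss, h => by
    rw [forestCode_leaf_cons, forestCode_leaf_cons, List.cons_inj_right] at h
    rw [forestCode_inj h]
  | leaf :: _, node _ :: _, h | node _ :: _, leaf :: _, h => by simp at h
  | node f :: ts, node g :: ss, h => by
    rw [forestCode_node_cons, forestCode_node_cons, List.cons_inj_right] at h
    obtain ⟨hfg, rfl⟩ := List.append_inj (forestCode_inj h) (by simp)
    rw [List.ofFn_inj.mp hfg]
termination_by ts => (forestCode ts).length
decreasing_by all_goals simp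

theorem code_injective : Function.Injective (code : KTree k → List Bool) := fun _ _ h ↦
  List.singleton_inj.mp (forestCode_inj (by simpa using h))

end KTree

open KTree

theorem IsLukasiewicz.exists_forestCode_eq {k : ℕ} {m : ℤ} {l : List Bool}
    (h : IsLukasiewicz k m l) :
    ∃ ts : List (KTree k), (ts.length : ℤ) = m ∧ forestCode ts = l := by
  induction l generalizing m with
  | nil => exact ⟨[], by simpa [IsLukasiewicz, eq_comm] using h, rfl⟩
  | cons b l ih =>
    obtain ⟨hm, hl⟩ := h
    cases b <;> simp only [Bool.false_eq_true, if_true, if_false] at hl <;>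
      obtain ⟨ts, hlen, rfl⟩ := ih hl
    · exact ⟨leaf :: ts, by simp only [List.length_cons]; push_cast; omega, rfl⟩
    · have hk : k ≤ ts.length := by omega
      refine ⟨node (fun i : Fin k => ts[i]) :: ts.drop k, ?_, ?_⟩
      · simp only [List.length_cons, List.length_drop]
        omega
      · have htake : List.ofFn (fun i : Fin k => ts[i]) = ts.take k := Fin.ofFn_take_get ts hk
        rw [forestCode_node_cons, htake, List.take_append_drop]

def IsPrefixClosed {α : Type*} (P : Finset (List α)) : Prop :=
  ∀ w ∈ P, ∀ p, p <+: w → p ∈ P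

namespace KTree

variable {k : ℕ}

def addr : KTree k → Finset (List (Fin k))
  | leaf => ∅
  | node f => insert [] (univ.biUnion fun i => (f i).addr.map ⟨List.cons i, List.cons_injective⟩)

@[simp]
theorem addr_leaf : (leaf : KTree k).addr = ∅ := rfl

@[simp]
theorem nil_mem_addr_node (f : Fin k → KTree k) : [] ∈ (node f).addr :=
  mem_insert_self _ _

@[simp]
theorem cons_mem_addr_node (f : Fin k → KTree k) (i : Fin k) (w : List (Fin k)) :
    i :: w ∈ (node f).addr ↔ w ∈ (f i).addr := by
  simp [addr]

theorem card_addr_node (f : Fin k → KTree k) : #(node f).addr = 1 + ∑ i, #(f i).addr := by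
  rw [addr, card_insert_of_notMem (by simp), card_biUnion]
  · simp [add_comm]
  · intro i _ j _ hij
    simp [disjoint_left, hij.symm]

theorem count_true_code (t : KTree k) : (code t).count true = #t.addr := by
  induction t with
  | leaf => rfl
  | node f ih =>
    simp [code, card_addr_node, List.count_flatten, List.map_ofFn, Function.comp_def, ih,
      List.sum_ofFn, add_comm]

theorem image_code_eq (n : ℕ) :
    code '' {t : KTree k | #t.addr = n} = {l | IsLukasiewicz k 1 l ∧ l.count true = n} := by
  ext l
  constructor
  · rintro ⟨t, ht, rfl⟩
    exact ⟨by simpa using isLukasiewicz_forestCode [t], (count_true_code t).trans ht⟩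
  · rintro ⟨hl, hn⟩
    obtain ⟨ts, hlen, rfl⟩ := hl.exists_forestCode_eq
    obtain ⟨t, rfl⟩ := List.length_eq_one_iff.mp (by exact_mod_cast hlen)
    exact ⟨t, by simpa [count_true_code] using hn, by simp⟩

theorem addr_injective : Function.Injective (addr : KTree k → Finset (List (Fin k))) := by
  intro s t h
  induction s generalizing t with
  | leaf => cases t with
    | leaf => rfl
    | node g => simpa using congr(([] : List (Fin k)) ∈ $h)
  | node f ih => cases t with
    | leaf => simpa using congr(([] : List (Fin k)) ∈ $h).symm
    | node g =>
      congr 1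
      funext i
      refine ih i (ext fun w ↦ ?_)
      simpa using congr(i :: w ∈ $h)

theorem isPrefixClosed_addr (t : KTree k) : IsPrefixClosed t.addr := by
  induction t with
  | leaf => simp [IsPrefixClosed]
  | node f ih =>
    rintro (_ | ⟨i, w⟩) hw (_ | ⟨j, p⟩) hp
    · simp
    · simp at hp
    · simp
    · obtain ⟨rfl, hpw⟩ := List.cons_prefix_cons.mp hp
      exact (cons_mem_addr_node f _ p).mpr (ih _ w (by simpa using hw) p hpw)

theorem exists_addr_eq_of_length_lt (P : Finset (List (Fin k))) (hP : IsPrefixClosed P) (N : ℕ)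
    (hN : ∀ w ∈ P, w.length < N) : ∃ t : KTree k, t.addr = P := by
  induction N generalizing P with
  | zero => exact ⟨leaf, by simpa [eq_comm, eq_empty_iff_forall_notMem] using hN⟩
  | succ N ih =>
    rcases P.eq_empty_or_nonempty with rfl | ⟨w, hw⟩
    · exact ⟨leaf, rfl⟩
    have child (i : Fin k) :
        ∃ t : KTree k, t.addr = P.preimage (List.cons i) List.cons_injective.injOn :=
      ih _ (fun _ hw p hp ↦ by
          simpa using hP _ (mem_preimage.mp hw) _ (List.cons_prefix_cons.mpr ⟨rfl, hp⟩))
        fun w hw ↦ by simpa using hN _ (mem_preimage.mp hw)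
    choose f hf using child
    refine ⟨node f, ext fun v ↦ ?_⟩
    rcases v with _ | ⟨i, v⟩
    · simpa using hP w hw [] List.nil_prefix
    · simp [hf]

theorem exists_addr_eq (P : Finset (List (Fin k))) (hP : IsPrefixClosed P) :
    ∃ t : KTree k, t.addr = P :=
  exists_addr_eq_of_length_lt P hP _ fun _ hw ↦ Nat.lt_succ_of_le (le_sup (f := List.length) hw)

theorem image_addr_eq (n : ℕ) :
    addr '' {t : KTree k | #t.addr = n} = {P | #P = n ∧ IsPrefixClosed P} := by
  ext P
  constructor
  · rintro ⟨t, ht, rfl⟩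
    exact ⟨ht, isPrefixClosed_addr t⟩
  · rintro ⟨hn, hP⟩
    obtain ⟨t, rfl⟩ := exists_addr_eq P hP
    exact ⟨t, hn, rfl⟩

end KTree

def IsBallot (k : ℕ) {m : ℕ} (E : Finset (Fin m)) : Prop :=
  ∀ j, 1 ≤ j → j ≤ m → j ≤ k * #(E.filter (·.val < j))

/-- The appended `false` is the last leaf of the coded tree. -/
def ballotWord {m : ℕ} (E : Finset (Fin m)) : List Bool :=
  List.ofFn (fun i => decide (i ∈ E)) ++ [false]

theorem ballotWord_injective {m : ℕ} : Function.Injective (ballotWord (m := m)) := by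
  intro E F h
  have := List.ofFn_inj.mp (List.append_cancel_right h)
  ext i
  simpa using congr_fun this i

theorem exists_ballotWord_eq {m : ℕ} (w : List Bool) (hw : w.length = m) :
    ∃ E : Finset (Fin m), ballotWord E = w ++ [false] := by
  subst hw
  exact ⟨univ.filter fun i => w[i], by simp [ballotWord, List.ofFn_getElem]⟩

theorem count_true_take_ofFn_mem {m : ℕ} (E : Finset (Fin m)) (j : ℕ) :
    ((List.ofFn fun i => decide (i ∈ E)).take j).count true = #(E.filter (·.val < j)) := by
  rw [List.ofFn_eq_map, ← List.map_take, List.count_eq_countP, List.countP_map,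
    List.countP_eq_length_filter, ← List.toFinset_card_of_nodup
      ((List.filter_sublist.trans (List.take_sublist _ _)).nodup (List.nodup_finRange m))]
  congr 1
  ext i
  simp only [List.toFinset_filter, mem_filter, List.mem_toFinset, List.mem_take_iff_getElem,
    List.getElem_finRange]
  constructor
  · rintro ⟨⟨j, hj, rfl⟩, hE⟩
    exact ⟨by simpa using hE, (lt_min_iff.mp hj).1⟩
  · rintro ⟨hE, hi⟩
    exact ⟨⟨i, lt_min hi (by simp), rfl⟩, by simpa using hE⟩

theorem count_true_take_ballotWord {m : ℕ} (E : Finset (Fin m)) {j : ℕ} (hj : j ≤ m) :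
    ((ballotWord E).take j).count true = #(E.filter (·.val < j)) := by
  rw [ballotWord, List.take_append_of_le_length (by simpa using hj), count_true_take_ofFn_mem]

theorem count_true_ballotWord {m : ℕ} (E : Finset (Fin m)) : (ballotWord E).count true = #E := by
  simpa [List.take_of_length_le, filter_true_of_mem, ballotWord] using
    count_true_take_ballotWord E le_rfl

theorem isLukasiewicz_ballotWord_iff {k m : ℕ} (E : Finset (Fin m)) :
    IsLukasiewicz k 1 (ballotWord E) ↔ m = k * #E ∧ IsBallot k E := by
  have hlen : (ballotWord E).length = m + 1 := by simp [ballotWord]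
  rw [isLukasiewicz_iff, count_true_ballotWord, hlen]
  refine and_comm.trans (and_congr (by constructor <;> intro h <;> push_cast at * <;> linarith) ?_)
  refine ⟨fun h j _ hj ↦ ?_, fun h j hj ↦ ?_⟩
  · have := h j (Nat.lt_succ_of_le hj)
    rw [count_true_take_ballotWord E hj, add_comm, Int.lt_add_one_iff] at this
    exact_mod_cast this
  · rcases Nat.eq_zero_or_pos j with rfl | hj0
    · simp
    · rw [count_true_take_ballotWord E (Nat.le_of_lt_succ hj), add_comm, Int.lt_add_one_iff]
      exact_mod_cast h j hj0 (Nat.le_of_lt_succ hj)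

theorem image_ballotWord_eq {k : ℕ} (hk : 0 < k) (n : ℕ) :
    ballotWord '' {E : Finset (Fin (k * n)) | #E = n ∧ IsBallot k E} =
      {l | IsLukasiewicz k 1 l ∧ l.count true = n} := by
  ext l
  constructor
  · rintro ⟨E, ⟨hn, hE⟩, rfl⟩
    exact ⟨(isLukasiewicz_ballotWord_iff E).mpr ⟨by rw [hn], hE⟩, (count_true_ballotWord E).trans hn⟩
  · rintro ⟨hl, hn⟩
    have hlen := (isLukasiewicz_iff.mp hl).2
    obtain rfl | ⟨w, b, rfl⟩ := l.eq_nil_or_concat'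
    · simp at hlen
    obtain rfl := hl.eq_false_of_append hk
    obtain ⟨E, hE⟩ := exists_ballotWord_eq (m := k * n) w (by simp only [List.length_append, List.length_singleton, hn] at hlen; omega)
    have hcard : #E = n := by rw [← count_true_ballotWord, hE, hn]
    exact ⟨E, ⟨hcard, ((isLukasiewicz_ballotWord_iff E).mp (hE ▸ hl)).2⟩, hE⟩

theorem ballot_subsets_card_eq_prefix_closed_sets_card_general (n k : ℕ) (hk : 1 ≤ k) :
    ({E : Finset (Fin (k * n)) |
        E.card = n ∧
        ∀ j : ℕ, 1 ≤ j → j ≤ k * n →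
          j ≤ k * (E.filter (fun i => i.val < j)).card} : Set _).ncard =
      ({P : Finset (List (Fin k)) |
        P.card = n ∧
        ∀ w ∈ P, ∀ p : List (Fin k), p <+: w → p ∈ P} : Set _).ncard := by
  change {E : Finset (Fin (k * n)) | #E = n ∧ IsBallot k E}.ncard =
    {P : Finset (List (Fin k)) | #P = n ∧ IsPrefixClosed P}.ncard
  rw [← Set.ncard_image_of_injective _ ballotWord_injective, image_ballotWord_eq hk, ← image_code_eq,
    Set.ncard_image_of_injective _ code_injective, ← image_addr_eq,
    Set.ncard_image_of_injective _ addr_injective]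

/-- For all integers `n ≥ 1` and `k ≥ 1`, the number of subsets `E` of
`{0, 1, ..., kn-1}` of cardinality `n` satisfying the ballot condition (for every
`j` with `1 ≤ j ≤ kn`, `k·|{i ∈ E : i < j}| ≥ j`) equals the number of
prefix-closed sets of `n` words over a `k`-letter alphabet. -/
theorem ballot_subsets_card_eq_prefix_closed_sets_card (n k : ℕ) (hn : 1 ≤ n) (hk : 1 ≤ k) :
    ({E : Finset (Fin (k * n)) |
        E.card = n ∧
        ∀ j : ℕ, 1 ≤ j → j ≤ k * n →
          j ≤ k * (E.filter (fun i => i.val < j)).card} : Set _).ncard =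
      ({P : Finset (List (Fin k)) |
        P.card = n ∧
        ∀ w ∈ P, ∀ p : List (Fin k), p <+: w → p ∈ P} : Set _).ncard :=
  ballot_subsets_card_eq_prefix_closed_sets_card_general n k hk
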